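/- arXiv:2409.07873 — 2 statements merged into one kernel-verified Lean document; each statement's English description precedes it below -/
import Mathlib

section
/- Let d ≥ 1, let D ⊆ ℝ^d be a bounded open set, let s_1, …, s_N ∈ ℝ^d be pairwise distinct, and let ν ∈ ℝ^N. Then the function ψ ↦ K(s,ν,ψ) is concave on ℝ^N and is differentiable at every ψ ∈ ℝ^N, with gradient ∇_ψ K(s,ν,ψ) = F(s,ν,ψ), where F(s,ν,ψ) ∈ ℝ^N is the vector with components F_i(s,ν,ψ) := ν_i − vol(V_i(s,ψ)). -/
open MeasureTheory

noncomputable section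

/-- The Laguerre cell `Lag_i(s, ψ)` of the diagram of the domain `D` generated by the
seed points `s` and weights `ψ`. -/
def Lag {d N : ℕ} (D : Set (EuclideanSpace ℝ (Fin d)))
    (s : Fin N → EuclideanSpace ℝ (Fin d)) (ψ : Fin N → ℝ) (i : Fin N) :
    Set (EuclideanSpace ℝ (Fin d)) :=
  {x | x ∈ closure D ∧ ∀ j : Fin N, j ≠ i → ‖x - s i‖ ^ 2 - ψ i ≤ ‖x - s j‖ ^ 2 - ψ j}

/-- The modified Laguerre cell `V_i(s, ψ)`: the Laguerre cell intersected with the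
closed ball of center `s i` and radius `√(ψ i)`. -/
def Vcell {d N : ℕ} (D : Set (EuclideanSpace ℝ (Fin d)))
    (s : Fin N → EuclideanSpace ℝ (Fin d)) (ψ : Fin N → ℝ) (i : Fin N) :
    Set (EuclideanSpace ℝ (Fin d)) :=
  Lag D s ψ i ∩ {x | ‖x - s i‖ ^ 2 ≤ ψ i}

/-- The void cell `V_0(s, ψ)`. -/
def Vvoid {d N : ℕ} (D : Set (EuclideanSpace ℝ (Fin d)))
    (s : Fin N → EuclideanSpace ℝ (Fin d)) (ψ : Fin N → ℝ) :
    Set (EuclideanSpace ℝ (Fin d)) :=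
  {x | x ∈ closure D ∧ ∀ i : Fin N, 0 ≤ ‖x - s i‖ ^ 2 - ψ i}

/-- The Kantorovich functional `K(s, ν, ψ)`. -/
def Kfun {d N : ℕ} (D : Set (EuclideanSpace ℝ (Fin d)))
    (s : Fin N → EuclideanSpace ℝ (Fin d)) (ν ψ : Fin N → ℝ) : ℝ :=
  (∑ i, ∫ x in Vcell D s ψ i, (‖x - s i‖ ^ 2 - ψ i)) + ∑ i, ν i * ψ i

/-!
Off the null set where two power distances `|x - sᵢ|² - ψᵢ` tie or one of them vanishes, the
integrand of `K` is the lower envelope `m_ψ(x) = min (0, minᵢ (|x - sᵢ|² - ψᵢ))`, so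
`K(ψ) = ∫_{D̄} m_ψ + ν·ψ`. For any `φ`, on `V_i(ψ)` we have
`m_φ(x) ≤ |x - sᵢ|² - φᵢ = m_ψ(x) - (φᵢ - ψᵢ)`, and on the void cell `m_φ ≤ 0 = m_ψ`; integrating
gives the supergradient inequality `K(φ) ≤ K(ψ) + ⟨F(ψ), φ - ψ⟩`, hence concavity. The cell volumes
depend continuously on `ψ` (dominated convergence, since ties are null), and a function with a
continuous field of supergradients is differentiable with that field as its derivative.
-/

open Filter Topology

theorem ConcaveOn.of_le_add_apply_sub {E : Type*} [AddCommGroup E] [Module ℝ E] {f : E → ℝ}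
    (g : E → E →ₗ[ℝ] ℝ) (h : ∀ x y, f y ≤ f x + g x (y - x)) : ConcaveOn ℝ Set.univ f := by
  refine ⟨convex_univ, fun x _ y _ a b ha hb hab => ?_⟩
  set z := a • x + b • y
  have hbal : a • (x - z) + b • (y - z) = 0 := by
    rw [smul_sub, smul_sub, sub_add_sub_comm, ← add_smul, hab, one_smul, sub_self]
  have hzero : a * g z (x - z) + b * g z (y - z) = 0 := by
    simpa only [map_add, map_smul, smul_eq_mul, map_zero] using congrArg (g z) hbal
  have hab' : a * f z + b * f z = f z := by rw [← add_mul, hab, one_mul]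
  simp only [smul_eq_mul]
  nlinarith [mul_le_mul_of_nonneg_left (h z x) ha, mul_le_mul_of_nonneg_left (h z y) hb]

theorem hasFDerivAt_of_le_add_apply_sub {E : Type*} [NormedAddCommGroup E] [NormedSpace ℝ E]
    {f : E → ℝ} {g : E → E →L[ℝ] ℝ} (h : ∀ x y, f y ≤ f x + g x (y - x)) {x : E}
    (hg : ContinuousAt g x) : HasFDerivAt f (g x) x := by
  rw [hasFDerivAt_iff_isLittleO_nhds_zero, Asymptotics.isLittleO_iff]
  intro ε hε
  have hlim : Tendsto (fun v => ‖g (x + v) - g x‖) (𝓝 0) (𝓝 0) := by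
    have h0 : Tendsto (fun v => x + v) (𝓝 0) (𝓝 x) := by
      simpa using (continuous_const_add x).tendsto (0 : E)
    simpa using ((hg.tendsto.comp h0).sub_const (g x)).norm
  filter_upwards [hlim.eventually (ge_mem_nhds hε)] with v hv
  -- supergradients at `x` and at `x + v` squeeze the remainder between `(g (x+v) - g x) v` and `0`
  have hupper := h x (x + v)
  have hlower := h (x + v) x
  have hdiff : |g (x + v) v - g x v| ≤ ε * ‖v‖ := by
    simpa using ((g (x + v) - g x).le_opNorm v).trans
      (mul_le_mul_of_nonneg_right hv (norm_nonneg v))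
  simp only [add_sub_cancel_left, sub_add_cancel_left, map_neg] at hupper hlower
  rw [Real.norm_eq_abs, abs_le]
  constructor <;> linarith [abs_le.1 hdiff]

theorem ContinuousAt.eventually_le_iff {X α : Type*} [TopologicalSpace X] [LinearOrder α]
    [TopologicalSpace α] [OrderClosedTopology α] {f g : X → α} {a : X}
    (hf : ContinuousAt f a) (hg : ContinuousAt g a) (hne : f a ≠ g a) :
    ∀ᶠ b in 𝓝 a, (f b ≤ g b ↔ f a ≤ g a) := by
  rcases hne.lt_or_gt with hlt | hgt
  · filter_upwards [hf.eventually_lt hg hlt] with b hb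
    exact iff_of_true hb.le hlt.le
  · filter_upwards [hg.eventually_lt hf hgt] with b hb
    exact iff_of_false (not_le.2 hb) (not_le.2 hgt)

theorem MeasureTheory.Measure.addHaar_setOf_inner_eq {E : Type*} [NormedAddCommGroup E]
    [InnerProductSpace ℝ E] [FiniteDimensional ℝ E] [MeasurableSpace E] [BorelSpace E]
    (μ : Measure E) [μ.IsAddHaarMeasure] {v : E} (hv : v ≠ 0) (k : ℝ) :
    μ {x | inner ℝ v x = k} = 0 := by
  set x₀ : E := (k / ‖v‖ ^ 2) • v
  have hx₀ : inner ℝ v x₀ = k := by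
    rw [real_inner_smul_right, real_inner_self_eq_norm_sq]
    field_simp [norm_ne_zero_iff.2 hv]
  have hset : {x | inner ℝ v x = k} = (· + -x₀) ⁻¹' (LinearMap.ker (innerₛₗ ℝ v) : Set E) := by
    ext x
    simp [inner_add_right, inner_neg_right, hx₀, add_neg_eq_zero]
  rw [hset, measure_preimage_add_right]
  refine addHaar_submodule μ _ fun htop => hv ?_
  have : v ∈ LinearMap.ker (innerₛₗ ℝ v) := htop ▸ Submodule.mem_top
  simpa using this

namespace Laguerre

variable {d N : ℕ} {D : Set (EuclideanSpace ℝ (Fin d))} {s : Fin N → EuclideanSpace ℝ (Fin d)}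
  {ψ φ : Fin N → ℝ} {x : EuclideanSpace ℝ (Fin d)}

def powerDist (s : Fin N → EuclideanSpace ℝ (Fin d)) (ψ : Fin N → ℝ) (i : Fin N)
    (x : EuclideanSpace ℝ (Fin d)) : ℝ :=
  ‖x - s i‖ ^ 2 - ψ i

/-- `min (0, minᵢ powerDist s ψ i x)`; the index `none` contributes the `0`, which also keeps the
infimum over a nonempty set when `N = 0`. -/
def powerEnvelope (s : Fin N → EuclideanSpace ℝ (Fin d)) (ψ : Fin N → ℝ)
    (x : EuclideanSpace ℝ (Fin d)) : ℝ :=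
  Finset.univ.inf' Finset.univ_nonempty fun o : Option (Fin N) => o.elim 0 (powerDist s ψ · x)

lemma continuous_powerDist (s : Fin N → EuclideanSpace ℝ (Fin d)) (ψ : Fin N → ℝ) (i : Fin N) :
    Continuous (powerDist s ψ i) := by
  unfold powerDist; fun_prop

lemma continuous_powerDist_weights (s : Fin N → EuclideanSpace ℝ (Fin d)) (i : Fin N)
    (x : EuclideanSpace ℝ (Fin d)) : Continuous fun ψ => powerDist s ψ i x := by
  unfold powerDist; fun_prop

lemma powerDist_sub_weights (i : Fin N) :
    powerDist s φ i x = powerDist s ψ i x - (φ i - ψ i) := by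
  unfold powerDist; ring

lemma powerEnvelope_le_zero : powerEnvelope s ψ x ≤ 0 :=
  Finset.inf'_le _ (Finset.mem_univ none)

lemma powerEnvelope_le_powerDist (i : Fin N) : powerEnvelope s ψ x ≤ powerDist s ψ i x :=
  Finset.inf'_le _ (Finset.mem_univ (some i))

lemma le_powerEnvelope {c : ℝ} (h0 : c ≤ 0) (h : ∀ i, c ≤ powerDist s ψ i x) :
    c ≤ powerEnvelope s ψ x :=
  Finset.le_inf' _ _ fun o _ => by cases o <;> simp [h0, h]

lemma powerEnvelope_eq_zero_or_exists :
    powerEnvelope s ψ x = 0 ∨ ∃ i, powerEnvelope s ψ x = powerDist s ψ i x := by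
  obtain ⟨o, -, ho⟩ := Finset.exists_mem_eq_inf' Finset.univ_nonempty
    fun o : Option (Fin N) => o.elim 0 (powerDist s ψ · x)
  cases o with
  | none => exact Or.inl ho
  | some i => exact Or.inr ⟨i, ho⟩

lemma continuous_powerEnvelope (s : Fin N → EuclideanSpace ℝ (Fin d)) (ψ : Fin N → ℝ) :
    Continuous (powerEnvelope s ψ) :=
  Continuous.finset_inf'_apply Finset.univ_nonempty fun o _ => by
    cases o
    exacts [continuous_const, continuous_powerDist s ψ _]

lemma mem_Vcell_iff {i : Fin N} :
    x ∈ Vcell D s ψ i ↔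
      x ∈ closure D ∧ (∀ j, powerDist s ψ i x ≤ powerDist s ψ j x) ∧ powerDist s ψ i x ≤ 0 := by
  simp only [Vcell, Lag, Set.mem_inter_iff, Set.mem_ofPred_eq, powerDist, sub_nonpos, and_assoc]
  refine and_congr_right fun _ => and_congr_left fun _ => ⟨fun h j => ?_, fun h j _ => h j⟩
  rcases eq_or_ne j i with rfl | hj
  exacts [le_rfl, h j hj]

lemma Vcell_subset_closure (i : Fin N) : Vcell D s ψ i ⊆ closure D :=
  fun _ hx => (mem_Vcell_iff.1 hx).1

lemma isClosed_Vcell (i : Fin N) : IsClosed (Vcell D s ψ i) := by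
  have hset : Vcell D s ψ i = closure D ∩ (⋂ j, {x | powerDist s ψ i x ≤ powerDist s ψ j x}) ∩
      {x | powerDist s ψ i x ≤ 0} := by
    ext x
    simp only [mem_Vcell_iff, Set.mem_inter_iff, Set.mem_iInter, Set.mem_ofPred_eq, and_assoc]
  rw [hset]
  exact (isClosed_closure.inter (isClosed_iInter fun j =>
    isClosed_le (continuous_powerDist s ψ i) (continuous_powerDist s ψ j))).inter
    (isClosed_le (continuous_powerDist s ψ i) continuous_const)

lemma measurableSet_Vcell (i : Fin N) : MeasurableSet (Vcell D s ψ i) :=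
  (isClosed_Vcell i).measurableSet

lemma volume_Vcell_lt_top (hK : IsCompact (closure D)) (i : Fin N) :
    volume (Vcell D s ψ i) < ⊤ :=
  (measure_mono (Vcell_subset_closure i)).trans_lt hK.measure_lt_top

lemma powerEnvelope_eq_of_mem_Vcell {i : Fin N} (hi : x ∈ Vcell D s ψ i) :
    powerEnvelope s ψ x = powerDist s ψ i x := by
  obtain ⟨-, hmin, hneg⟩ := mem_Vcell_iff.1 hi
  exact le_antisymm (powerEnvelope_le_powerDist i) (le_powerEnvelope hneg hmin)

lemma powerEnvelope_eq_zero_of_forall_notMem (hx : x ∈ closure D)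
    (h : ∀ i, x ∉ Vcell D s ψ i) : powerEnvelope s ψ x = 0 := by
  refine powerEnvelope_eq_zero_or_exists.resolve_right fun ⟨i, hi⟩ => h i ?_
  exact mem_Vcell_iff.2 ⟨hx, fun j => hi ▸ powerEnvelope_le_powerDist j, hi ▸ powerEnvelope_le_zero⟩

def IsGeneric (s : Fin N → EuclideanSpace ℝ (Fin d)) (ψ : Fin N → ℝ)
    (x : EuclideanSpace ℝ (Fin d)) : Prop :=
  Pairwise (fun i j => powerDist s ψ i x ≠ powerDist s ψ j x) ∧ ∀ i, powerDist s ψ i x ≠ 0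

lemma volume_setOf_powerDist_eq_powerDist (ψ : Fin N → ℝ) {i j : Fin N} (hij : s i ≠ s j) :
    volume {x | powerDist s ψ i x = powerDist s ψ j x} = 0 := by
  have hset : {x | powerDist s ψ i x = powerDist s ψ j x} =
      {x | inner ℝ (s j - s i) x = (ψ i - ψ j - ‖s i‖ ^ 2 + ‖s j‖ ^ 2) / 2} := by
    ext x
    simp only [Set.mem_ofPred_eq, powerDist, norm_sub_sq_real, inner_sub_left, real_inner_comm x]
    constructor <;> intro h <;> linarith
  rw [hset]
  exact Measure.addHaar_setOf_inner_eq volume (sub_ne_zero.2 hij.symm) _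

lemma volume_setOf_powerDist_eq_zero (hd : 1 ≤ d) (ψ : Fin N → ℝ) (i : Fin N) :
    volume {x | powerDist s ψ i x = 0} = 0 := by
  have : Nontrivial (EuclideanSpace ℝ (Fin d)) :=
    have : Nonempty (Fin d) := ⟨⟨0, hd⟩⟩; inferInstance
  refine measure_mono_null (fun x (hx : powerDist s ψ i x = 0) => ?_)
    (Measure.addHaar_sphere volume (s i) √(ψ i))
  rw [mem_sphere_iff_norm, ← sub_eq_zero.1 hx, Real.sqrt_sq (norm_nonneg _)]

lemma ae_isGeneric (hd : 1 ≤ d) (hs : Function.Injective s) (ψ : Fin N → ℝ) :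
    ∀ᵐ x, IsGeneric s ψ x := by
  refine (ae_all_iff.2 fun i => ae_all_iff.2 fun j => ?_).and
    (ae_all_iff.2 fun i => ae_iff.2 (by simpa using volume_setOf_powerDist_eq_zero hd ψ i))
  rcases eq_or_ne i j with rfl | hij
  · exact ae_of_all _ fun x h => absurd rfl h
  · exact ae_iff.2 (by simpa [hij] using volume_setOf_powerDist_eq_powerDist ψ (hs.ne hij))


lemma IsGeneric.eq_of_mem_Vcell (hx : IsGeneric s ψ x) {i j : Fin N} (hi : x ∈ Vcell D s ψ i)
    (hj : x ∈ Vcell D s ψ j) : i = j := by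
  by_contra hij
  exact hx.1 hij <| le_antisymm ((mem_Vcell_iff.1 hi).2.1 j) ((mem_Vcell_iff.1 hj).2.1 i)

lemma IsGeneric.sum_indicator_Vcell (hx : IsGeneric s ψ x) {i : Fin N} (hi : x ∈ Vcell D s ψ i)
    (f : Fin N → EuclideanSpace ℝ (Fin d) → ℝ) :
    ∑ j, (Vcell D s ψ j).indicator (f j) x = f i x := by
  rw [Finset.sum_eq_single i (fun j _ hji => Set.indicator_of_notMem
    (fun hj => hji (hx.eq_of_mem_Vcell hj hi)) _) (by simp), Set.indicator_of_mem hi]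

lemma IsGeneric.powerEnvelope_le_sum_indicator (hx : IsGeneric s ψ x) (φ : Fin N → ℝ) :
    powerEnvelope s φ x ≤ ∑ i, (Vcell D s ψ i).indicator (powerDist s φ i) x := by
  by_cases hcell : ∃ i, x ∈ Vcell D s ψ i
  · obtain ⟨i, hi⟩ := hcell
    rw [hx.sum_indicator_Vcell hi]
    exact powerEnvelope_le_powerDist i
  · simp only [not_exists] at hcell
    simpa [Set.indicator_of_notMem (hcell _)] using powerEnvelope_le_zero

lemma IsGeneric.powerEnvelope_eq_sum_indicator (hx : IsGeneric s ψ x) (hD : x ∈ closure D) :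
    powerEnvelope s ψ x = ∑ i, (Vcell D s ψ i).indicator (powerDist s ψ i) x := by
  by_cases hcell : ∃ i, x ∈ Vcell D s ψ i
  · obtain ⟨i, hi⟩ := hcell
    rw [hx.sum_indicator_Vcell hi, powerEnvelope_eq_of_mem_Vcell hi]
  · simp only [not_exists] at hcell
    simp [Set.indicator_of_notMem (hcell _), powerEnvelope_eq_zero_of_forall_notMem hD hcell]

lemma IsGeneric.eventually_mem_Vcell_iff (hx : IsGeneric s ψ x) (i : Fin N) :
    ∀ᶠ φ in 𝓝 ψ, (x ∈ Vcell D s φ i ↔ x ∈ Vcell D s ψ i) := by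
  by_cases hD : x ∈ closure D
  swap
  · exact Eventually.of_forall fun φ => by simp [mem_Vcell_iff, hD]
  -- away from ties, each comparison defining the cell keeps its truth value near `ψ`
  have hcmp : ∀ j, ∀ᶠ φ in 𝓝 ψ,
      (powerDist s φ i x ≤ powerDist s φ j x ↔ powerDist s ψ i x ≤ powerDist s ψ j x) := by
    intro j
    rcases eq_or_ne i j with rfl | hij
    · exact Eventually.of_forall fun φ => by simp
    · exact (continuous_powerDist_weights s i x).continuousAt.eventually_le_iff
        (continuous_powerDist_weights s j x).continuousAt (hx.1 hij)
  have hsign := (continuous_powerDist_weights s i x).continuousAt.eventually_le_iff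
    continuousAt_const (hx.2 i)
  filter_upwards [eventually_all.2 hcmp, hsign] with φ hφ hφ0
  simp only [mem_Vcell_iff, hD, true_and, forall_congr' hφ, hφ0]

lemma tendsto_volume_Vcell (hd : 1 ≤ d) (hs : Function.Injective s)
    (hK : IsCompact (closure D)) (ψ : Fin N → ℝ) (i : Fin N) :
    Tendsto (fun φ => volume (Vcell D s φ i)) (𝓝 ψ) (𝓝 (volume (Vcell D s ψ i))) :=
  tendsto_measure_of_ae_tendsto_indicator _ (measurableSet_Vcell i) (fun _ => measurableSet_Vcell i)
    isClosed_closure.measurableSet hK.measure_lt_top.ne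
    (Eventually.of_forall fun _ => Vcell_subset_closure i)
    ((ae_isGeneric hd hs ψ).mono fun _ hx => hx.eventually_mem_Vcell_iff i)

lemma integrableOn_powerDist (hK : IsCompact (closure D)) (ψ : Fin N → ℝ) (i : Fin N) :
    IntegrableOn (powerDist s ψ i) (closure D) :=
  (continuous_powerDist s ψ i).continuousOn.integrableOn_compact hK

lemma integral_sum_indicator_Vcell (hK : IsCompact (closure D)) (ψ φ : Fin N → ℝ) :
    ∫ x in closure D, ∑ i, (Vcell D s ψ i).indicator (powerDist s φ i) x =
      ∑ i, ∫ x in Vcell D s ψ i, powerDist s φ i x := by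
  rw [integral_finsetSum _ fun i _ =>
    (integrableOn_powerDist hK φ i).indicator (measurableSet_Vcell i)]
  refine Finset.sum_congr rfl fun i _ => ?_
  rw [setIntegral_indicator (measurableSet_Vcell i),
    Set.inter_eq_self_of_subset_right (Vcell_subset_closure i)]

lemma integral_powerEnvelope (hd : 1 ≤ d) (hs : Function.Injective s)
    (hK : IsCompact (closure D)) (ψ : Fin N → ℝ) :
    ∫ x in closure D, powerEnvelope s ψ x = ∑ i, ∫ x in Vcell D s ψ i, powerDist s ψ i x := by
  rw [← integral_sum_indicator_Vcell hK]
  refine integral_congr_ae ?_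
  filter_upwards [ae_restrict_of_ae (ae_isGeneric hd hs ψ),
    ae_restrict_mem isClosed_closure.measurableSet] with x hx hD
  exact hx.powerEnvelope_eq_sum_indicator hD

lemma integral_powerEnvelope_le (hd : 1 ≤ d) (hs : Function.Injective s)
    (hK : IsCompact (closure D)) (ψ φ : Fin N → ℝ) :
    ∫ x in closure D, powerEnvelope s φ x ≤ ∑ i, ∫ x in Vcell D s ψ i, powerDist s φ i x := by
  rw [← integral_sum_indicator_Vcell hK]
  refine integral_mono_ae ((continuous_powerEnvelope s φ).continuousOn.integrableOn_compact hK)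
    (integrable_finsetSum _ fun i _ =>
      (integrableOn_powerDist hK φ i).indicator (measurableSet_Vcell i)) ?_
  filter_upwards [ae_restrict_of_ae (ae_isGeneric hd hs ψ)] with x hx
  exact hx.powerEnvelope_le_sum_indicator φ

lemma setIntegral_powerDist_eq (hK : IsCompact (closure D)) (ψ φ : Fin N → ℝ) (i : Fin N) :
    ∫ x in Vcell D s ψ i, powerDist s φ i x =
      (∫ x in Vcell D s ψ i, powerDist s ψ i x) -
        (φ i - ψ i) * (volume (Vcell D s ψ i)).toReal := by
  have hint : IntegrableOn (powerDist s ψ i) (Vcell D s ψ i) :=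
    (integrableOn_powerDist hK ψ i).mono_set (Vcell_subset_closure i)
  simp_rw [powerDist_sub_weights (φ := φ) (ψ := ψ)]
  rw [integral_sub hint (integrableOn_const (volume_Vcell_lt_top hK i).ne), setIntegral_const,
    smul_eq_mul, mul_comm, measureReal_def]

lemma Kfun_eq_integral_powerEnvelope (hd : 1 ≤ d) (hs : Function.Injective s)
    (hK : IsCompact (closure D)) (ν ψ : Fin N → ℝ) :
    Kfun D s ν ψ = (∫ x in closure D, powerEnvelope s ψ x) + ∑ i, ν i * ψ i := by
  rw [integral_powerEnvelope hd hs hK]; rfl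

def kantorovichGrad (D : Set (EuclideanSpace ℝ (Fin d))) (s : Fin N → EuclideanSpace ℝ (Fin d))
    (ν ψ : Fin N → ℝ) : (Fin N → ℝ) →L[ℝ] ℝ :=
  ∑ i, (ν i - (volume (Vcell D s ψ i)).toReal) • ContinuousLinearMap.proj i

lemma kantorovichGrad_apply (ν ψ h : Fin N → ℝ) :
    kantorovichGrad D s ν ψ h = ∑ i, (ν i - (volume (Vcell D s ψ i)).toReal) * h i := by
  simp [kantorovichGrad]

lemma Kfun_le_add_kantorovichGrad (hd : 1 ≤ d) (hs : Function.Injective s)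
    (hK : IsCompact (closure D)) (ν ψ φ : Fin N → ℝ) :
    Kfun D s ν φ ≤ Kfun D s ν ψ + kantorovichGrad D s ν ψ (φ - ψ) := by
  have hle := integral_powerEnvelope_le hd hs hK ψ φ
  simp only [setIntegral_powerDist_eq hK ψ φ] at hle
  have hgrad : kantorovichGrad D s ν ψ (φ - ψ) = ∑ i, ν i * φ i - ∑ i, ν i * ψ i -
      ∑ i, (φ i - ψ i) * (volume (Vcell D s ψ i)).toReal := by
    simp only [kantorovichGrad_apply, Pi.sub_apply, ← Finset.sum_sub_distrib]
    exact Finset.sum_congr rfl fun i _ => by ring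
  rw [Kfun_eq_integral_powerEnvelope hd hs hK ν φ, Kfun_eq_integral_powerEnvelope hd hs hK ν ψ,
    integral_powerEnvelope hd hs hK ψ, hgrad]
  rw [Finset.sum_sub_distrib] at hle
  linarith

lemma continuous_kantorovichGrad (hd : 1 ≤ d) (hs : Function.Injective s)
    (hK : IsCompact (closure D)) (ν : Fin N → ℝ) : Continuous (kantorovichGrad D s ν) := by
  have hvol (i : Fin N) : Continuous fun ψ => (volume (Vcell D s ψ i)).toReal :=
    continuous_iff_continuousAt.2 fun ψ => (ENNReal.tendsto_toReal
      (volume_Vcell_lt_top hK i).ne).comp (tendsto_volume_Vcell hd hs hK ψ i)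
  exact continuous_finsetSum _ fun i _ => (continuous_const.sub (hvol i)).smul continuous_const

end Laguerre

open Laguerre in
theorem stmt2_general {d N : ℕ} (hd : 1 ≤ d)
    (D : Set (EuclideanSpace ℝ (Fin d)))
    (hDb : Bornology.IsBounded D)
    (s : Fin N → EuclideanSpace ℝ (Fin d)) (hs : Function.Injective s)
    (ν : Fin N → ℝ) :
    ConcaveOn ℝ Set.univ (fun ψ : Fin N → ℝ => Kfun D s ν ψ) ∧
    ∀ ψ : Fin N → ℝ, ∃ L : (Fin N → ℝ) →L[ℝ] ℝ,
      (∀ h : Fin N → ℝ, L h = ∑ i, (ν i - (volume (Vcell D s ψ i)).toReal) * h i) ∧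
      HasFDerivAt (fun φ : Fin N → ℝ => Kfun D s ν φ) L ψ := by
  have hK : IsCompact (closure D) := hDb.isCompact_closure
  have hsuper (ψ φ : Fin N → ℝ) :
      Kfun D s ν φ ≤ Kfun D s ν ψ + kantorovichGrad D s ν ψ (φ - ψ) :=
    Kfun_le_add_kantorovichGrad hd hs hK ν ψ φ
  refine ⟨ConcaveOn.of_le_add_apply_sub (fun ψ => (kantorovichGrad D s ν ψ).toLinearMap) hsuper,
    fun ψ => ⟨kantorovichGrad D s ν ψ, kantorovichGrad_apply ν ψ, ?_⟩⟩
  exact hasFDerivAt_of_le_add_apply_sub hsuper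
    (continuous_kantorovichGrad hd hs hK ν).continuousAt

/-- The Kantorovich functional is concave and everywhere differentiable in the weights,
with gradient `F(s, ν, ψ)_i = ν_i - vol(V_i(s, ψ))`. -/
theorem stmt2 {d N : ℕ} (hd : 1 ≤ d)
    (D : Set (EuclideanSpace ℝ (Fin d)))
    (hDo : IsOpen D) (hDb : Bornology.IsBounded D)
    (s : Fin N → EuclideanSpace ℝ (Fin d)) (hs : Function.Injective s)
    (ν : Fin N → ℝ) :
    ConcaveOn ℝ Set.univ (fun ψ : Fin N → ℝ => Kfun D s ν ψ) ∧
    ∀ ψ : Fin N → ℝ, ∃ L : (Fin N → ℝ) →L[ℝ] ℝ,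
      (∀ h : Fin N → ℝ, L h = ∑ i, (ν i - (volume (Vcell D s ψ i)).toReal) * h i) ∧
      HasFDerivAt (fun φ : Fin N → ℝ => Kfun D s ν φ) L ψ :=
  stmt2_general hd D hDb s hs ν
end
end

section
/- Let d ≥ 1, let D ⊆ ℝ^d be a bounded open set, let s_1, …, s_N ∈ ℝ^d be pairwise distinct, and let ν ∈ ℝ^N. Then for all weight vectors ψ, φ ∈ ℝ^N the supergradient inequality holds: K(s,ν,φ) ≤ K(s,ν,ψ) + Σ_{i=1}^N (ν_i − vol(V_i(s,ψ))) (φ_i − ψ_i). -/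
/-!
Let `F = min(0, minᵢ (‖x - sᵢ‖² - φᵢ))`. It equals `‖x - sᵢ‖² - φᵢ` on the `φ`-cell `Vᵢ(φ)`
and vanishes on the rest of `closure D`, so the integral part of `K(s, ν, φ)` is `∫ F` over the
union of the `φ`-cells. Since `F ≤ 0`, this is at most `∫ F` over the union of the `ψ`-cells,
and on `Vᵢ(ψ)` we have `F ≤ ‖x - sᵢ‖² - φᵢ = (‖x - sᵢ‖² - ψᵢ) - (φᵢ - ψᵢ)`; integrating gives
the supergradient term. Distinct seeds make two cells meet only in a hyperplane, which is
Lebesgue-null, so integrals over unions of cells split into sums.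
-/

open MeasureTheory

noncomputable section

open Set

section Hyperplane

variable {E : Type*} [NormedAddCommGroup E] [InnerProductSpace ℝ E] [FiniteDimensional ℝ E]
  [MeasurableSpace E] [BorelSpace E] (μ : Measure E) [μ.IsAddHaarMeasure]

lemma addHaar_setOf_inner_eq {v : E} (hv : v ≠ 0) (r : ℝ) :
    μ {x | inner ℝ v x = r} = 0 := by
  rcases eq_empty_or_nonempty {x | inner ℝ v x = r} with h | ⟨x₀, hx₀ : inner ℝ v x₀ = r⟩
  · rw [h, measure_empty]
  have hker : LinearMap.ker (innerₛₗ ℝ v) ≠ ⊤ := fun h =>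
    hv (inner_self_eq_zero.1 (h ▸ Submodule.mem_top : v ∈ LinearMap.ker (innerₛₗ ℝ v)))
  have hpre : {x | inner ℝ v x = r} = (· + -x₀) ⁻¹' (LinearMap.ker (innerₛₗ ℝ v) : Set E) := by
    ext x
    simp [← sub_eq_add_neg, inner_sub_right, hx₀, sub_eq_zero]
  rw [hpre, measure_preimage_add_right]
  exact Measure.addHaar_submodule μ _ hker

lemma addHaar_setOf_norm_sub_sq_sub_eq {a b : E} (hab : a ≠ b) (α β : ℝ) :
    μ {x | ‖x - a‖ ^ 2 - α = ‖x - b‖ ^ 2 - β} = 0 := by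
  convert addHaar_setOf_inner_eq μ (sub_ne_zero.2 hab.symm) ((α - β - ‖a‖ ^ 2 + ‖b‖ ^ 2) / 2)
    using 2
  ext x
  rw [mem_ofPred_eq, mem_ofPred_eq, norm_sub_sq_real, norm_sub_sq_real, inner_sub_left,
    real_inner_comm x a, real_inner_comm x b]
  constructor <;> intro h <;> linarith

end Hyperplane

lemma setIntegral_le_setIntegral_of_nonpos_of_eqOn_zero {X : Type*} [MeasurableSpace X]
    {μ : Measure X} {f : X → ℝ} {A B : Set X} (hA : MeasurableSet A) (hB : MeasurableSet B)
    (hfA : IntegrableOn f A μ) (hfB : IntegrableOn f B μ) (hf_nonpos : ∀ x ∈ A \ B, f x ≤ 0)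
    (hf_zero : EqOn f 0 (B \ A)) :
    ∫ x in A, f x ∂μ ≤ ∫ x in B, f x ∂μ := by
  rw [← integral_indicator hA, ← integral_indicator hB]
  refine integral_mono (hfA.integrable_indicator hA) (hfB.integrable_indicator hB) fun x => ?_
  by_cases hxA : x ∈ A <;> by_cases hxB : x ∈ B
  · simp [hxA, hxB]
  · simpa [hxA, hxB] using hf_nonpos x ⟨hxA, hxB⟩
  · simpa [hxA, hxB] using (hf_zero ⟨hxB, hxA⟩).ge
  · simp [hxA, hxB]

section LowerEnvelope

variable {E ι : Type*} [NormedAddCommGroup E] (s : ι → E) (φ : ι → ℝ)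

def lowerEnvelope (x : E) : ℝ :=
  min 0 (⨅ i, ‖x - s i‖ ^ 2 - φ i)

lemma lowerEnvelope_nonpos (x : E) : lowerEnvelope s φ x ≤ 0 :=
  min_le_left _ _

lemma lowerEnvelope_le [Finite ι] (x : E) (i : ι) : lowerEnvelope s φ x ≤ ‖x - s i‖ ^ 2 - φ i :=
  (min_le_right _ _).trans (ciInf_le (Finite.bddBelow_range _) i)

lemma continuous_lowerEnvelope [Fintype ι] : Continuous (lowerEnvelope s φ) := by
  refine continuous_const.min ?_
  cases isEmpty_or_nonempty ι
  · simp only [Real.iInf_of_isEmpty]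
    exact continuous_const
  · simp only [← Finset.inf'_univ_eq_ciInf]
    exact Continuous.finset_inf'_apply _ fun i _ => by fun_prop

end LowerEnvelope

section Vcell

variable {d N : ℕ} {D : Set (EuclideanSpace ℝ (Fin d))} {s : Fin N → EuclideanSpace ℝ (Fin d)}

lemma isClosed_Vcell (D : Set (EuclideanSpace ℝ (Fin d))) (s : Fin N → EuclideanSpace ℝ (Fin d))
    (φ : Fin N → ℝ) (i : Fin N) : IsClosed (Vcell D s φ i) := by
  have hLag : Lag D s φ i = closure D ∩ ⋂ j ∈ ({i}ᶜ : Set (Fin N)),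
      {x | ‖x - s i‖ ^ 2 - φ i ≤ ‖x - s j‖ ^ 2 - φ j} := by
    ext x; simp [Lag]
  rw [Vcell, hLag]
  exact (isClosed_closure.inter (isClosed_biInter fun j _ => isClosed_le (by fun_prop)
    (by fun_prop))).inter (isClosed_le (by fun_prop) continuous_const)

lemma Vcell_subset_closedBall (φ : Fin N → ℝ) (i : Fin N) :
    Vcell D s φ i ⊆ Metric.closedBall (s i) √(φ i) := fun _ hx => by
  simpa [dist_eq_norm] using Real.abs_le_sqrt hx.2

lemma isCompact_Vcell (D : Set (EuclideanSpace ℝ (Fin d))) (s : Fin N → EuclideanSpace ℝ (Fin d))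
    (φ : Fin N → ℝ) (i : Fin N) : IsCompact (Vcell D s φ i) :=
  Metric.isCompact_of_isClosed_isBounded (isClosed_Vcell D s φ i)
    (Metric.isBounded_closedBall.subset (Vcell_subset_closedBall φ i))

lemma aedisjoint_Vcell (hs : Function.Injective s) (φ : Fin N → ℝ) :
    Pairwise (Function.onFun (AEDisjoint volume) fun i => Vcell D s φ i) := fun i j hij =>
  measure_mono_null (fun _ hx => le_antisymm (hx.1.1.2 j hij.symm) (hx.2.1.2 i hij))
    (addHaar_setOf_norm_sub_sq_sub_eq volume (hs.ne hij) (φ i) (φ j))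

lemma setIntegral_iUnion_Vcell (hs : Function.Injective s) (φ : Fin N → ℝ)
    {f : EuclideanSpace ℝ (Fin d) → ℝ} (hf : Continuous f) :
    ∫ x in ⋃ i, Vcell D s φ i, f x = ∑ i, ∫ x in Vcell D s φ i, f x := by
  rw [integral_iUnion_ae (fun i => (isClosed_Vcell D s φ i).measurableSet.nullMeasurableSet)
    (aedisjoint_Vcell hs φ) (hf.continuousOn.integrableOn_compact
      (isCompact_iUnion fun i => isCompact_Vcell D s φ i)), tsum_fintype]

lemma lowerEnvelope_eq_of_mem_Vcell {φ : Fin N → ℝ} {i : Fin N} {x : EuclideanSpace ℝ (Fin d)}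
    (hx : x ∈ Vcell D s φ i) : lowerEnvelope s φ x = ‖x - s i‖ ^ 2 - φ i := by
  have : Nonempty (Fin N) := ⟨i⟩
  have hmin : ⨅ j, ‖x - s j‖ ^ 2 - φ j = ‖x - s i‖ ^ 2 - φ i := by
    refine le_antisymm (ciInf_le (Finite.bddBelow_range _) i) (le_ciInf fun j => ?_)
    rcases eq_or_ne j i with rfl | hji
    · rfl
    · exact hx.1.2 j hji
  rw [lowerEnvelope, hmin, min_eq_right (sub_nonpos.2 hx.2)]

lemma lowerEnvelope_eq_zero_of_notMem_Vcell {φ : Fin N → ℝ} {x : EuclideanSpace ℝ (Fin d)}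
    (hxD : x ∈ closure D) (hx : ∀ i, x ∉ Vcell D s φ i) : lowerEnvelope s φ x = 0 := by
  refine min_eq_left (Real.iInf_nonneg fun i => ?_)
  by_contra! hi
  have : Nonempty (Fin N) := ⟨i⟩
  obtain ⟨k, hk⟩ := Finite.exists_min fun j => ‖x - s j‖ ^ 2 - φ j
  exact hx k ⟨⟨hxD, fun j _ => hk j⟩, sub_nonpos.1 ((hk i).trans hi.le)⟩

lemma sum_setIntegral_Vcell_le (hs : Function.Injective s) (φ ψ : Fin N → ℝ) :
    ∑ i, ∫ x in Vcell D s φ i, (‖x - s i‖ ^ 2 - φ i) ≤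
      ∑ i, ∫ x in Vcell D s ψ i, (‖x - s i‖ ^ 2 - φ i) := by
  set F := lowerEnvelope s φ
  have hF : Continuous F := continuous_lowerEnvelope s φ
  have hU (w : Fin N → ℝ) : IsCompact (⋃ i, Vcell D s w i) :=
    isCompact_iUnion fun i => isCompact_Vcell D s w i
  calc ∑ i, ∫ x in Vcell D s φ i, (‖x - s i‖ ^ 2 - φ i)
      = ∑ i, ∫ x in Vcell D s φ i, F x :=
        Finset.sum_congr rfl fun i _ => setIntegral_congr_fun (isClosed_Vcell D s φ i).measurableSet
          fun _ hx => (lowerEnvelope_eq_of_mem_Vcell hx).symm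
    _ = ∫ x in ⋃ i, Vcell D s φ i, F x := (setIntegral_iUnion_Vcell hs φ hF).symm
    _ ≤ ∫ x in ⋃ i, Vcell D s ψ i, F x := by
        refine setIntegral_le_setIntegral_of_nonpos_of_eqOn_zero (hU φ).isClosed.measurableSet
          (hU ψ).isClosed.measurableSet (hF.continuousOn.integrableOn_compact (hU φ))
          (hF.continuousOn.integrableOn_compact (hU ψ)) (fun x _ => lowerEnvelope_nonpos s φ x)
          fun x ⟨hxψ, hxφ⟩ => ?_
        obtain ⟨i, hi⟩ := mem_iUnion.1 hxψ
        exact lowerEnvelope_eq_zero_of_notMem_Vcell hi.1.1 (by simpa using hxφ)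
    _ = ∑ i, ∫ x in Vcell D s ψ i, F x := setIntegral_iUnion_Vcell hs ψ hF
    _ ≤ ∑ i, ∫ x in Vcell D s ψ i, (‖x - s i‖ ^ 2 - φ i) :=
        Finset.sum_le_sum fun i _ => setIntegral_mono_on
          (hF.continuousOn.integrableOn_compact (isCompact_Vcell D s ψ i))
          ((by fun_prop : Continuous fun x => ‖x - s i‖ ^ 2 - φ i).continuousOn.integrableOn_compact
            (isCompact_Vcell D s ψ i))
          (isClosed_Vcell D s ψ i).measurableSet fun x _ => lowerEnvelope_le s φ x i

lemma setIntegral_Vcell_sub_weight (D : Set (EuclideanSpace ℝ (Fin d)))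
    (s : Fin N → EuclideanSpace ℝ (Fin d)) (ψ : Fin N → ℝ) (i : Fin N) (c : ℝ) :
    ∫ x in Vcell D s ψ i, (‖x - s i‖ ^ 2 - c) =
      (∫ x in Vcell D s ψ i, (‖x - s i‖ ^ 2 - ψ i)) -
        (volume (Vcell D s ψ i)).toReal * (c - ψ i) := by
  have hK := isCompact_Vcell D s ψ i
  have hint : IntegrableOn (fun x => ‖x - s i‖ ^ 2 - ψ i) (Vcell D s ψ i) :=
    (by fun_prop : Continuous fun x => ‖x - s i‖ ^ 2 - ψ i).continuousOn.integrableOn_compact hK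
  simp_rw [show ∀ x, ‖x - s i‖ ^ 2 - c = (‖x - s i‖ ^ 2 - ψ i) - (c - ψ i) from fun _ => by ring]
  rw [integral_sub hint (integrableOn_const hK.measure_lt_top.ne), setIntegral_const, smul_eq_mul,
    measureReal_def]

end Vcell

theorem stmt3_general {d N : ℕ}
    (D : Set (EuclideanSpace ℝ (Fin d)))
    (s : Fin N → EuclideanSpace ℝ (Fin d)) (hs : Function.Injective s)
    (ν : Fin N → ℝ) (ψ φ : Fin N → ℝ) :
    Kfun D s ν φ ≤ Kfun D s ν ψ +
      ∑ i, (ν i - (volume (Vcell D s ψ i)).toReal) * (φ i - ψ i) := by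
  have key := sum_setIntegral_Vcell_le (D := D) hs φ ψ
  simp only [setIntegral_Vcell_sub_weight D s ψ _ (φ _), mul_sub, Finset.sum_sub_distrib] at key
  simp only [Kfun, sub_mul, mul_sub, Finset.sum_sub_distrib]
  linarith

/-- Supergradient inequality for the Kantorovich functional. -/
theorem stmt3 {d N : ℕ} (hd : 1 ≤ d)
    (D : Set (EuclideanSpace ℝ (Fin d)))
    (hDo : IsOpen D) (hDb : Bornology.IsBounded D)
    (s : Fin N → EuclideanSpace ℝ (Fin d)) (hs : Function.Injective s)
    (ν : Fin N → ℝ) (ψ φ : Fin N → ℝ) :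
    Kfun D s ν φ ≤ Kfun D s ν ψ +
      ∑ i, (ν i - (volume (Vcell D s ψ i)).toReal) * (φ i - ψ i) :=
  stmt3_general D s hs ν ψ φ
end
end
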